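/- arXiv:2202.12647 — 4 statements merged into one kernel-verified Lean document; each statement's English description precedes it below -/
import Mathlib

section
/- Let X_1, …, X_k and Y be normed linear spaces over F, and let T, A be nonzero bounded k-linear maps from X_1 × ⋯ × X_k to Y. Then T ⊥_B A if and only if 0 lies in the convex hull of Ω(T,A) := { λ ∈ F : there exist sequences (x⃗ₙ) in S_{X_1} × ⋯ × S_{X_k} and (yₙ*) in S_{Y*} with yₙ*(T x⃗ₙ) → ‖T‖ and yₙ*(A x⃗ₙ) → λ }. -/
/-!
Write `P` for the bounded set of pairs `(y (T x), y (A x))` over unit vectors `x` and unit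
functionals `y`. The sequences defining `Ω(T, A)` are exactly those converging in `closure P`, so
`Ω(T, A) = {μ | (‖T‖, μ) ∈ closure P}` is compact, and so is its convex hull (Carathéodory). Hence
`0 ∈ conv Ω(T, A)` iff every real functional `μ ↦ re (c * μ)` is nonnegative somewhere on
`Ω(T, A)`.

If `μ ∈ Ω(T, A)`, then `‖T + c • A‖ ≥ re (‖T‖ + c * μ)`, so a point with `re (c * μ) ≥ 0` gives
`‖T + c • A‖ ≥ ‖T‖`. Conversely, if `‖T + (t * c) • A‖ ≥ ‖T‖` for `t > 0`, pick unit `x`, `y` with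
`y ((T + (t * c) • A) x) = ‖(T + (t * c) • A) x‖ > ‖T‖ - t ^ 2`. Taking real parts and using
`‖y (T x)‖ ≤ ‖T‖` gives `re (y (T x)) ≥ ‖T‖ - O(t)` and `re (c * y (A x)) ≥ -t`; a limit point in
`closure P` as `t → 0` is `(‖T‖, μ)` with `re (c * μ) ≥ 0`.
-/

open Filter Topology Set Metric

section ConvexHull

variable {E : Type*} [NormedAddCommGroup E] [NormedSpace ℝ E] [FiniteDimensional ℝ E]

theorem isCompact_convexHull {s : Set E} (hs : IsCompact s) : IsCompact (convexHull ℝ s) := by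
  rcases s.eq_empty_or_nonempty with rfl | ⟨s₀, hs₀⟩
  · simp
  -- Carathéodory: the hull consists of convex combinations of `finrank ℝ E + 1` points of `s`.
  set m := Module.finrank ℝ E + 1
  let combo : (Fin m → ℝ) × (Fin m → E) → E := fun p => ∑ j, p.1 j • p.2 j
  suffices convexHull ℝ s = combo '' (stdSimplex ℝ (Fin m) ×ˢ univ.pi fun _ => s) by
    rw [this]
    exact ((isCompact_stdSimplex ℝ _).prod (isCompact_univ_pi fun _ => hs)).image (by fun_prop)
  refine Subset.antisymm (fun x hx => ?_) ?_
  · obtain ⟨ι, _, z, w, hzs, hz, hw0, hw1, rfl⟩ := eq_pos_convex_span_of_mem_convexHull hx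
    obtain ⟨e⟩ : Nonempty (ι ↪ Fin m) := Function.Embedding.nonempty_of_card_le <| by
      simpa [m] using hz.card_le_finrank_succ.trans (by gcongr; exact Submodule.finrank_le _)
    set ω : Fin m → ℝ := Function.extend e w 0
    set ζ : Fin m → E := Function.extend e z fun _ => s₀
    have hω : ∀ j ∉ range e, ω j = 0 := fun j hj => Function.extend_apply' (f := e) _ _ _ hj
    have hζ : ∀ j ∉ range e, ζ j = s₀ := fun j hj => Function.extend_apply' (f := e) _ _ _ hj
    have hωe (i : ι) : ω (e i) = w i := e.injective.extend_apply _ _ _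
    have hζe (i : ι) : ζ (e i) = z i := e.injective.extend_apply _ _ _
    refine ⟨(ω, ζ), ⟨⟨fun j => ?_, ?_⟩, fun j _ => show ζ j ∈ s from ?_⟩, ?_⟩
    · by_cases hj : j ∈ range e
      · obtain ⟨i, rfl⟩ := hj
        exact (hωe i).ge.trans' (hw0 i).le
      · exact (hω j hj).ge
    · rw [← hw1]
      exact (Fintype.sum_of_injective e e.injective _ _ hω fun i => (hωe i).symm).symm
    · by_cases hj : j ∈ range e
      · obtain ⟨i, rfl⟩ := hj
        exact (hζe i).symm ▸ hzs (mem_range_self i)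
      · exact (hζ j hj).symm ▸ (hs₀ : s₀ ∈ s)
    · refine (Fintype.sum_of_injective e e.injective _ _ (fun j hj => ?_) fun i => ?_).symm
      · simp [hω j hj]
      · simp [hωe, hζe]
  · rintro _ ⟨⟨ω, ζ⟩, ⟨⟨hω0, hω1⟩, hζ⟩, rfl⟩
    exact (convex_convexHull ℝ s).sum_mem (fun i _ => hω0 i) hω1
      fun i _ => subset_convexHull ℝ s (hζ i (mem_univ i))

theorem IsCompact.mem_convexHull_iff_forall_exists_le {s : Set E} (hs : IsCompact s) {x : E} :
    x ∈ convexHull ℝ s ↔ ∀ f : StrongDual ℝ E, ∃ y ∈ s, f x ≤ f y := by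
  refine ⟨fun hx f => ?_, fun h => ?_⟩
  · by_contra! hlt
    have : convexHull ℝ s ⊆ {y | f y < f x} :=
      convexHull_min hlt (convex_halfSpace_lt f.toLinearMap.isLinear _)
    exact lt_irrefl (f x) (this hx)
  · by_contra hx
    obtain ⟨f, u, hfu, hux⟩ :=
      geometric_hahn_banach_closed_point (convex_convexHull ℝ s)
        (isCompact_convexHull hs).isClosed hx
    obtain ⟨y, hy, hxy⟩ := h f
    linarith [hfu y (subset_convexHull ℝ s hy)]

end ConvexHull

theorem IsCompact.exists_nonneg_of_forall_exists_neg_le {E : Type*} [TopologicalSpace E]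
    {K : Set E} (hK : IsCompact K) {g : E → ℝ} (hg : ContinuousOn g K)
    (h : ∀ δ > 0, ∃ p ∈ K, -δ ≤ g p) : ∃ p ∈ K, 0 ≤ g p := by
  obtain ⟨p, hpK, -⟩ := h 1 one_pos
  obtain ⟨q, hqK, hq⟩ := hK.exists_isMaxOn ⟨p, hpK⟩ hg
  refine ⟨q, hqK, le_of_forall_pos_le_add fun δ hδ => ?_⟩
  obtain ⟨p, hpK, hp⟩ := h δ hδ
  linarith [isMaxOn_iff.1 hq p hpK]

open RCLike ComplexConjugate

theorem RCLike.exists_re_mul_eq {𝕜 : Type*} [RCLike 𝕜] (f : StrongDual ℝ 𝕜) :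
    ∃ c : 𝕜, ∀ μ, f μ = re (c * μ) :=
  ⟨conj ((InnerProductSpace.toDual ℝ 𝕜).symm f), fun μ => by
    rw [← InnerProductSpace.toDual_symm_apply, real_inner_eq_re_inner 𝕜, inner_apply, mul_comm]⟩

section Multilinear

variable {𝕜 : Type*} [RCLike 𝕜] {ι : Type*} [Fintype ι] {X : ι → Type*}
  [∀ i, NormedAddCommGroup (X i)] [∀ i, NormedSpace 𝕜 (X i)]
  {Y : Type*} [NormedAddCommGroup Y] [NormedSpace 𝕜 Y]

namespace ContinuousMultilinearMap

theorem norm_apply_apply_le (B : ContinuousMultilinearMap 𝕜 X Y) {x : ∀ i, X i}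
    {y : Y →L[𝕜] 𝕜} (hx : ∀ i, ‖x i‖ ≤ 1) (hy : ‖y‖ ≤ 1) : ‖y (B x)‖ ≤ ‖B‖ :=
  calc ‖y (B x)‖ ≤ 1 * ‖B x‖ := y.le_of_opNorm_le hy _
    _ ≤ ‖B‖ :=
      (one_mul _).trans_le (B.unit_le_opNorm ((pi_norm_le_iff_of_nonneg zero_le_one).2 hx))

theorem exists_norm_eq_one_lt_norm_apply (B : ContinuousMultilinearMap 𝕜 X Y) {r : ℝ}
    (hr₀ : 0 ≤ r) (hr : r < ‖B‖) : ∃ x : ∀ i, X i, (∀ i, ‖x i‖ = 1) ∧ r < ‖B x‖ := by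
  obtain ⟨m, hm⟩ : ∃ m : ∀ i, X i, r * ∏ i, ‖m i‖ < ‖B m‖ := by
    by_contra! h
    exact hr.not_ge ((opNorm_le_iff hr₀).2 h)
  have hm₀ (i : ι) : m i ≠ 0 := by
    intro hi
    rw [B.map_coord_zero i hi, norm_zero] at hm
    exact hm.not_ge (by positivity)
  refine ⟨fun i => ((‖m i‖⁻¹ : ℝ) : 𝕜) • m i, fun i => ?_, ?_⟩
  · simp [norm_smul, hm₀ i]
  · rw [B.map_smul_univ, norm_smul, norm_prod]
    simp only [norm_ofReal, abs_inv, abs_norm]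
    rw [Finset.prod_inv_distrib, inv_mul_eq_div,
      lt_div_iff₀ (Finset.prod_pos fun i _ => norm_pos_iff.2 (hm₀ i))]
    exact hm

variable (T A : ContinuousMultilinearMap 𝕜 X Y)

def pairingSet : Set (𝕜 × 𝕜) :=
  {p | ∃ (x : ∀ i, X i) (y : Y →L[𝕜] 𝕜), (∀ i, ‖x i‖ = 1) ∧ ‖y‖ = 1 ∧ p = (y (T x), y (A x))}

def omegaSet : Set 𝕜 :=
  {lam | ((‖T‖ : 𝕜), lam) ∈ closure (pairingSet T A)}

theorem setOf_tendsto_eq_omegaSet :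
    {lam : 𝕜 | ∃ (x : ℕ → ∀ i, X i) (y : ℕ → (Y →L[𝕜] 𝕜)),
      (∀ n i, ‖x n i‖ = 1) ∧ (∀ n, ‖y n‖ = 1) ∧
      Tendsto (fun n => y n (T (x n))) atTop (𝓝 (‖T‖ : 𝕜)) ∧
      Tendsto (fun n => y n (A (x n))) atTop (𝓝 lam)} = omegaSet T A := by
  ext lam
  simp only [omegaSet, mem_ofPred_eq, mem_closure_iff_seq_limit]
  constructor
  · rintro ⟨x, y, hx, hy, hT, hA⟩
    exact ⟨fun n => (y n (T (x n)), y n (A (x n))), fun n => ⟨x n, y n, hx n, hy n, rfl⟩,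
      hT.prodMk_nhds hA⟩
  · rintro ⟨p, hp, hlim⟩
    choose x y hx hy hxy using hp
    obtain rfl : p = _ := funext hxy
    exact ⟨x, y, hx, hy, (continuous_fst.tendsto _).comp hlim,
      (continuous_snd.tendsto _).comp hlim⟩

theorem closure_pairingSet_subset :
    closure (pairingSet T A) ⊆ closedBall 0 ‖T‖ ×ˢ closedBall 0 ‖A‖ := by
  refine closure_minimal ?_ (isClosed_closedBall.prod isClosed_closedBall)
  rintro _ ⟨x, y, hx, hy, rfl⟩
  simp only [mem_prod, mem_closedBall_zero_iff]
  exact ⟨T.norm_apply_apply_le (fun i => (hx i).le) hy.le,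
    A.norm_apply_apply_le (fun i => (hx i).le) hy.le⟩

theorem isCompact_closure_pairingSet : IsCompact (closure (pairingSet T A)) :=
  ((isCompact_closedBall _ _).prod (isCompact_closedBall _ _)).of_isClosed_subset
    isClosed_closure (closure_pairingSet_subset T A)

theorem isCompact_omegaSet : IsCompact (omegaSet T A) := by
  refine (isCompact_closedBall (0 : 𝕜) ‖A‖).of_isClosed_subset
    (isClosed_closure.preimage (by fun_prop)) fun lam hlam => ?_
  exact (closure_pairingSet_subset T A hlam).2

variable {T A}

theorem norm_add_re_mul_le_of_mem_omegaSet {μ : 𝕜} (hμ : μ ∈ omegaSet T A) (lam : 𝕜) :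
    ‖T‖ + re (lam * μ) ≤ ‖T + lam • A‖ := by
  have hclosure : closure (pairingSet T A) ⊆ {p | ‖p.1 + lam * p.2‖ ≤ ‖T + lam • A‖} := by
    refine closure_minimal ?_ (isClosed_le (by fun_prop) continuous_const)
    rintro _ ⟨x, y, hx, hy, rfl⟩
    simpa using (T + lam • A).norm_apply_apply_le (fun i => (hx i).le) hy.le
  calc ‖T‖ + re (lam * μ) = re ((‖T‖ : 𝕜) + lam * μ) := by simp
    _ ≤ ‖(‖T‖ : 𝕜) + lam * μ‖ := re_le_norm _
    _ ≤ ‖T + lam • A‖ := hclosure hμ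

theorem exists_mem_pairingSet_of_norm_le_norm_add (hT : T ≠ 0) {c : 𝕜} {t : ℝ} (ht : 0 < t)
    (h : ‖T‖ ≤ ‖T + ((t : 𝕜) * c) • A‖) :
    ∃ p ∈ pairingSet T A, ‖T‖ - t * (t + ‖c‖ * ‖A‖) ≤ re p.1 ∧ -t ≤ re (c * p.2) := by
  set B := T + ((t : 𝕜) * c) • A
  have hr : max (‖T‖ - t ^ 2) 0 < ‖B‖ :=
    max_lt (by linarith [pow_pos ht 2]) ((norm_pos_iff.2 hT).trans_le h)
  obtain ⟨x, hx, hBx⟩ := B.exists_norm_eq_one_lt_norm_apply (le_max_right _ _) hr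
  obtain ⟨y, hy, hyBx⟩ := exists_dual_vector 𝕜 (B x) ((le_max_right _ _).trans_lt hBx).ne'
  refine ⟨_, ⟨x, y, hx, hy, rfl⟩, ?_⟩
  have hsplit : re (y (T x)) + t * re (c * y (A x)) = ‖B x‖ := by
    simpa [B, mul_assoc] using congrArg re hyBx
  have hTx : re (y (T x)) ≤ ‖T‖ :=
    (re_le_norm _).trans (T.norm_apply_apply_le (fun i => (hx i).le) hy.le)
  have hAx : re (c * y (A x)) ≤ ‖c‖ * ‖A‖ := (re_le_norm _).trans <| by
    rw [norm_mul]
    exact mul_le_mul_of_nonneg_left (A.norm_apply_apply_le (fun i => (hx i).le) hy.le)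
      (norm_nonneg c)
  have hBx' : ‖T‖ - t ^ 2 < ‖B x‖ := (le_max_left _ _).trans_lt hBx
  constructor
  · nlinarith
  · nlinarith

theorem exists_mem_omegaSet_zero_le_re_mul (hT : T ≠ 0) {c : 𝕜}
    (h : ∀ t : ℝ, 0 < t → ‖T‖ ≤ ‖T + ((t : 𝕜) * c) • A‖) :
    ∃ μ ∈ omegaSet T A, 0 ≤ re (c * μ) := by
  have happrox : ∀ δ > 0, ∃ p ∈ closure (pairingSet T A),
      -δ ≤ min (re p.1 - ‖T‖) (re (c * p.2)) := by
    intro δ hδ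
    have hsmall : Tendsto (fun t : ℝ => t * (t + ‖c‖ * ‖A‖ + 1)) (𝓝[>] 0) (𝓝 0) :=
      (Continuous.tendsto' (by fun_prop) 0 0 (by simp)).mono_left nhdsWithin_le_nhds
    obtain ⟨t, htδ, ht⟩ := ((hsmall.eventually (gt_mem_nhds hδ)).and self_mem_nhdsWithin).exists
    obtain ⟨q, hq, hq₁, hq₂⟩ := exists_mem_pairingSet_of_norm_le_norm_add hT ht (h t ht)
    have : 0 ≤ t * (t + ‖c‖ * ‖A‖) := by positivity
    exact ⟨q, subset_closure hq, le_min (by linarith) (by linarith)⟩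
  obtain ⟨p, hp, hgp⟩ :=
    (isCompact_closure_pairingSet T A).exists_nonneg_of_forall_exists_neg_le (by fun_prop) happrox
  obtain ⟨hp₁, hp₂⟩ := le_min_iff.1 hgp
  have hp₁norm : ‖p.1‖ ≤ ‖T‖ :=
    mem_closedBall_zero_iff.1 (closure_pairingSet_subset T A hp).1
  have hre : re p.1 = ‖T‖ := le_antisymm ((re_le_norm _).trans hp₁norm) (by linarith)
  have hp₁' : p.1 = ‖T‖ := by rw [← re_eq_self_of_le (hp₁norm.trans hre.ge), hre]
  refine ⟨p.2, ?_, hp₂⟩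
  show ((‖T‖ : 𝕜), p.2) ∈ closure (pairingSet T A)
  exact hp₁' ▸ hp

end ContinuousMultilinearMap

end Multilinear

open ContinuousMultilinearMap

theorem stmt2_general {𝕜 : Type*} [RCLike 𝕜] {k : ℕ} {X : Fin k → Type*}
    [∀ i, NormedAddCommGroup (X i)] [∀ i, NormedSpace 𝕜 (X i)]
    {Y : Type*} [NormedAddCommGroup Y] [NormedSpace 𝕜 Y]
    (T A : ContinuousMultilinearMap 𝕜 X Y) (hT : T ≠ 0) :
    (∀ lam : 𝕜, ‖T‖ ≤ ‖T + lam • A‖) ↔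
      (0 : 𝕜) ∈ convexHull ℝ {lam : 𝕜 | ∃ (x : ℕ → ∀ i, X i) (y : ℕ → (Y →L[𝕜] 𝕜)),
        (∀ n i, ‖x n i‖ = 1) ∧ (∀ n, ‖y n‖ = 1) ∧
        Tendsto (fun n => y n (T (x n))) atTop (𝓝 (‖T‖ : 𝕜)) ∧
        Tendsto (fun n => y n (A (x n))) atTop (𝓝 lam)} := by
  rw [setOf_tendsto_eq_omegaSet, (isCompact_omegaSet T A).mem_convexHull_iff_forall_exists_le]
  constructor
  · intro h f
    obtain ⟨c, hc⟩ := exists_re_mul_eq f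
    obtain ⟨μ, hμ, hcμ⟩ := exists_mem_omegaSet_zero_le_re_mul hT fun t _ => h _
    exact ⟨μ, hμ, by simpa [hc] using hcμ⟩
  · intro h lam
    obtain ⟨μ, hμ, hlamμ⟩ := h (reCLM.comp (ContinuousLinearMap.mul ℝ 𝕜 lam))
    have := norm_add_re_mul_le_of_mem_omegaSet hμ lam
    simp only [ContinuousLinearMap.comp_apply, ContinuousLinearMap.mul_apply', reCLM_apply,
      mul_zero, zero_re] at hlamμ
    linarith

theorem stmt2 {𝕜 : Type*} [RCLike 𝕜] {k : ℕ} {X : Fin k → Type*}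
    [∀ i, NormedAddCommGroup (X i)] [∀ i, NormedSpace 𝕜 (X i)]
    {Y : Type*} [NormedAddCommGroup Y] [NormedSpace 𝕜 Y]
    (T A : ContinuousMultilinearMap 𝕜 X Y) (hT : T ≠ 0) (hA : A ≠ 0) :
    (∀ lam : 𝕜, ‖T‖ ≤ ‖T + lam • A‖) ↔
      (0 : 𝕜) ∈ convexHull ℝ {lam : 𝕜 | ∃ (x : ℕ → ∀ i, X i) (y : ℕ → (Y →L[𝕜] 𝕜)),
        (∀ n i, ‖x n i‖ = 1) ∧ (∀ n, ‖y n‖ = 1) ∧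
        Tendsto (fun n => y n (T (x n))) atTop (𝓝 (‖T‖ : 𝕜)) ∧
        Tendsto (fun n => y n (A (x n))) atTop (𝓝 lam)} :=
  stmt2_general T A hT
end

section
/- Let H_1, …, H_k and H be Hilbert spaces, and let T, A be nonzero bounded k-linear maps from H_1 × ⋯ × H_k to H. Then T ⊥_B A if and only if 0 lies in the convex hull of W(T,A) := { β ∈ F : there exists a sequence (x⃗ₙ) in S_{H_1} × ⋯ × S_{H_k} with ‖T x⃗ₙ‖ → ‖T‖ and ⟨A x⃗ₙ, T x⃗ₙ⟩ → β }. -/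
/-!
If `0` is a convex combination of points of `W(T, A)`, fix `λ`: along a norming sequence,
`‖T x‖² + re (conj λ ⟪A x, T x⟫) = re ⟪(T + λ A) x, T x⟫ ≤ ‖T + λ A‖ ‖T x‖`, so the half-plane
`re (conj λ β) ≤ ‖T + λ A‖ ‖T‖ - ‖T‖²` contains `W(T, A)`, hence `0`, which gives `‖T‖ ≤ ‖T + λ A‖`.

Conversely `W(T, A)` is compact, so if `0 ∉ conv W(T, A)` some `μ` has `re (conj μ β) > 0` on it.
Orthogonality in the direction `λ = -t μ`, expanded to second order in `t`, yields unit tuples `x`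
with `‖T x‖ ≥ ‖T‖ - O(t)` and `re (conj μ ⟪A x, T x⟫) ≤ O(t)`; letting `t → 0`, a cluster point
of these inner products lies in `W(T, A)` and has `re (conj μ β) ≤ 0`.
-/

open Set Filter Topology Function Module RCLike ComplexConjugate
open scoped InnerProductSpace

theorem exists_fin_sum_smul_eq_of_mem_convexHull {E : Type*} [NormedAddCommGroup E]
    [NormedSpace ℝ E] [FiniteDimensional ℝ E] {s : Set E} {x : E} (hx : x ∈ convexHull ℝ s) :
    ∃ w ∈ stdSimplex ℝ (Fin (finrank ℝ E + 1)), ∃ z : Fin (finrank ℝ E + 1) → E,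
      (∀ i, z i ∈ s) ∧ ∑ i, w i • z i = x := by
  obtain ⟨s₀, hs₀⟩ := convexHull_nonempty_iff.1 ⟨x, hx⟩
  obtain ⟨ι, _, z, w, hzs, hz, hw0, hw1, rfl⟩ := eq_pos_convex_span_of_mem_convexHull hx
  obtain ⟨e⟩ : Nonempty (ι ↪ Fin (finrank ℝ E + 1)) := by
    refine Embedding.nonempty_of_card_le ?_
    simpa using hz.card_le_finrank_succ.trans (Nat.succ_le_succ (Submodule.finrank_le _))
  have hout : ∀ j ∉ range e, ¬∃ i, e i = j := fun j hj => by simpa using hj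
  have hw (i) : extend e w 0 (e i) = w i := e.injective.extend_apply _ _ _
  have hz (i) : extend e z (fun _ => s₀) (e i) = z i := e.injective.extend_apply _ _ _
  refine ⟨extend e w 0, ⟨fun j => ?_, ?_⟩, extend e z fun _ => s₀, fun j => ?_, ?_⟩
  · by_cases hj : j ∈ range e
    · obtain ⟨i, rfl⟩ := hj
      exact (hw i).symm ▸ (hw0 i).le
    · simp [extend_apply' _ _ _ (hout j hj)]
  · rw [← hw1]
    exact (Fintype.sum_of_injective e e.injective w (extend e w 0)
      (fun j hj => extend_apply' _ _ _ (hout j hj)) fun i => (hw i).symm).symm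
  · by_cases hj : j ∈ range e
    · obtain ⟨i, rfl⟩ := hj
      exact (hz i).symm ▸ hzs (mem_range_self i)
    · simpa [extend_apply' _ _ _ (hout j hj)] using hs₀
  · refine (Fintype.sum_of_injective e e.injective _ _ (fun j hj => ?_) fun i => ?_).symm
    · simp [extend_apply' _ _ _ (hout j hj)]
    · rw [hw, hz]

theorem IsCompact.convexHull {E : Type*} [NormedAddCommGroup E] [NormedSpace ℝ E]
    [FiniteDimensional ℝ E] {s : Set E} (hs : IsCompact s) : IsCompact (convexHull ℝ s) := by
  set n := finrank ℝ E + 1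
  set K := stdSimplex ℝ (Fin n) ×ˢ univ.pi fun _ : Fin n => s
  suffices _root_.convexHull ℝ s =
      (fun p : (Fin n → ℝ) × (Fin n → E) => ∑ i, p.1 i • p.2 i) '' K by
    rw [this]
    exact ((isCompact_stdSimplex ℝ _).prod (isCompact_univ_pi fun _ => hs)).image (by fun_prop)
  refine Subset.antisymm (fun x hx => ?_) ?_
  · obtain ⟨w, hw, z, hzs, rfl⟩ := exists_fin_sum_smul_eq_of_mem_convexHull hx
    exact ⟨(w, z), ⟨hw, fun i _ => hzs i⟩, rfl⟩
  · rintro _ ⟨⟨w, z⟩, ⟨⟨hw0, hw1⟩, hz⟩, rfl⟩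
    exact (convex_convexHull ℝ s).sum_mem (fun i _ => hw0 i) hw1
      fun i _ => subset_convexHull ℝ s (hz i (mem_univ i))

theorem RCLike.exists_re_conj_mul_pos_of_zero_notMem_convexHull {𝕜 : Type*} [RCLike 𝕜]
    {K : Set 𝕜} (hK : IsCompact K) (h0 : 0 ∉ convexHull ℝ K) :
    ∃ μ : 𝕜, ∀ β ∈ K, 0 < re (conj μ * β) := by
  obtain ⟨f, u, hf0, hfK⟩ :=
    _root_.geometric_hahn_banach_point_closed (convex_convexHull ℝ K) hK.convexHull.isClosed h0
  refine ⟨(InnerProductSpace.toDual ℝ 𝕜).symm f, fun β hβ => ?_⟩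
  have hfβ := InnerProductSpace.toDual_symm_apply (x := β) (y := f)
  rw [map_zero] at hf0
  rw [real_inner_eq_re_inner, RCLike.inner_apply'] at hfβ
  linarith [hfK β (subset_convexHull ℝ K hβ)]

theorem isClosed_setOf_exists_seq_tendsto {α Y Z : Type*} [TopologicalSpace Y]
    [TopologicalSpace Z] [FirstCountableTopology Y] [FirstCountableTopology Z]
    (s : Set α) (p : α → Y) (q : α → Z) (c : Y) :
    IsClosed {z | ∃ x : ℕ → α, (∀ n, x n ∈ s) ∧ Tendsto (fun n => p (x n)) atTop (𝓝 c) ∧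
      Tendsto (fun n => q (x n)) atTop (𝓝 z)} := by
  convert (isClosed_closure (s := (fun a => (p a, q a)) '' s)).preimage
    (Continuous.prodMk_right c) using 1
  ext z
  simp only [mem_ofPred_eq, mem_preimage, mem_closure_iff_seq_limit, mem_image]
  constructor
  · rintro ⟨x, hxs, hp, hq⟩
    exact ⟨_, fun n => ⟨x n, hxs n, rfl⟩, hp.prodMk_nhds hq⟩
  · rintro ⟨y, hy, hlim⟩
    choose x hxs hxy using hy
    simp only [← hxy, nhds_prod_eq, tendsto_prod_iff'] at hlim
    exact ⟨x, hxs, hlim⟩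

theorem norm_sub_smul_sq {𝕜 E : Type*} [RCLike 𝕜] [SeminormedAddCommGroup E]
    [InnerProductSpace 𝕜 E] (u v : E) (c : 𝕜) :
    ‖u - c • v‖ ^ 2 = ‖u‖ ^ 2 - 2 * re (conj c * ⟪v, u⟫_𝕜) + ‖c‖ ^ 2 * ‖v‖ ^ 2 := by
  rw [norm_sub_sq (𝕜 := 𝕜), inner_smul_right, norm_smul, mul_pow, ← inner_conj_symm,
    ← conj_re, map_mul, conj_conj]

theorem re_inner_add_smul_self {𝕜 E : Type*} [RCLike 𝕜] [SeminormedAddCommGroup E]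
    [InnerProductSpace 𝕜 E] (u v : E) (c : 𝕜) :
    re ⟪u + c • v, u⟫_𝕜 = ‖u‖ ^ 2 + re (conj c * ⟪v, u⟫_𝕜) := by
  rw [inner_add_left, inner_smul_left, map_add, inner_self_eq_norm_sq]

namespace ContinuousMultilinearMap

section Normed

variable {𝕜 ι : Type*} [RCLike 𝕜] [Fintype ι] {E : ι → Type*}
  [∀ i, NormedAddCommGroup (E i)] [∀ i, NormedSpace 𝕜 (E i)]
  {G : Type*} [NormedAddCommGroup G] [NormedSpace 𝕜 G]

theorem norm_apply_le_of_norm_eq_one (f : ContinuousMultilinearMap 𝕜 E G) {m : ∀ i, E i}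
    (hm : ∀ i, ‖m i‖ = 1) : ‖f m‖ ≤ ‖f‖ := by
  simpa [hm] using f.le_opNorm m

theorem opNorm_le_of_norm_eq_one (f : ContinuousMultilinearMap 𝕜 E G) {M : ℝ} (hM : 0 ≤ M)
    (h : ∀ m : ∀ i, E i, (∀ i, ‖m i‖ = 1) → ‖f m‖ ≤ M) : ‖f‖ ≤ M := by
  refine f.opNorm_le_bound hM fun m => ?_
  by_cases hm0 : ∃ i, m i = 0
  · obtain ⟨i, hi⟩ := hm0
    rw [f.map_coord_zero i hi, norm_zero]
    positivity
  push Not at hm0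
  set u : ∀ i, E i := fun i => (‖m i‖ : 𝕜)⁻¹ • m i
  have hu : ∀ i, ‖u i‖ = 1 := fun i => by simp [u, norm_smul, hm0 i]
  have hfm : f m = (∏ i, (‖m i‖ : 𝕜)) • f u := by
    rw [← f.map_smul_univ]
    congr 1
    ext i
    simp [u, smul_smul, hm0 i]
  calc ‖f m‖ = (∏ i, ‖m i‖) * ‖f u‖ := by simp [hfm, norm_smul, norm_prod]
    _ ≤ M * ∏ i, ‖m i‖ := by rw [mul_comm]; gcongr; exact h u hu

theorem exists_norm_eq_one_lt_norm_apply_s5 {f : ContinuousMultilinearMap 𝕜 E G} (hf : f ≠ 0)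
    {ε : ℝ} (hε : 0 < ε) : ∃ m : ∀ i, E i, (∀ i, ‖m i‖ = 1) ∧ ‖f‖ - ε < ‖f m‖ := by
  by_contra! h
  have hle := f.opNorm_le_of_norm_eq_one (le_max_right (‖f‖ - ε) 0)
    fun m hm => (h m hm).trans (le_max_left _ _)
  have : ‖f‖ ≤ 0 := by
    rcases le_max_iff.1 hle with h' | h'
    · linarith
    · exact h'
  exact hf (norm_eq_zero.1 (le_antisymm this (norm_nonneg f)))

end Normed

variable {𝕜 ι : Type*} [RCLike 𝕜] [Fintype ι] {E : ι → Type*}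
  [∀ i, NormedAddCommGroup (E i)] [∀ i, NormedSpace 𝕜 (E i)]
  {H : Type*} [NormedAddCommGroup H] [InnerProductSpace 𝕜 H]
  (T A : ContinuousMultilinearMap 𝕜 E H)

/-- The paper's `W(T, A)`. -/
def normingInnerLimits : Set 𝕜 :=
  {β | ∃ x : ℕ → ∀ i, E i, (∀ n i, ‖x n i‖ = 1) ∧ Tendsto (fun n => ‖T (x n)‖) atTop (𝓝 ‖T‖) ∧
    Tendsto (fun n => ⟪A (x n), T (x n)⟫_𝕜) atTop (𝓝 β)}

theorem norm_inner_apply_le {m : ∀ i, E i} (hm : ∀ i, ‖m i‖ = 1) :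
    ‖⟪A m, T m⟫_𝕜‖ ≤ ‖A‖ * ‖T‖ :=
  (norm_inner_le_norm _ _).trans <| mul_le_mul (A.norm_apply_le_of_norm_eq_one hm)
    (T.norm_apply_le_of_norm_eq_one hm) (norm_nonneg _) (norm_nonneg _)

theorem isCompact_normingInnerLimits : IsCompact (T.normingInnerLimits A) := by
  refine Metric.isCompact_of_isClosed_isBounded
    (isClosed_setOf_exists_seq_tendsto {m : ∀ i, E i | ∀ i, ‖m i‖ = 1} (fun m => ‖T m‖)
      (fun m => ⟪A m, T m⟫_𝕜) ‖T‖)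
    ((Metric.isBounded_closedBall (x := 0) (r := ‖A‖ * ‖T‖)).subset ?_)
  rintro β ⟨x, hx, -, hβ⟩
  exact mem_closedBall_zero_iff.2 <|
    le_of_tendsto hβ.norm (Eventually.of_forall fun n => T.norm_inner_apply_le A (hx n))

theorem exists_mem_normingInnerLimits_tendsto_subseq {x : ℕ → ∀ i, E i}
    (hx : ∀ n i, ‖x n i‖ = 1) (hTx : Tendsto (fun n => ‖T (x n)‖) atTop (𝓝 ‖T‖)) :
    ∃ β ∈ T.normingInnerLimits A, ∃ φ : ℕ → ℕ, StrictMono φ ∧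
      Tendsto (fun n => ⟪A (x (φ n)), T (x (φ n))⟫_𝕜) atTop (𝓝 β) := by
  obtain ⟨β, -, φ, hφ, hβ⟩ := tendsto_subseq_of_bounded (x := fun n => ⟪A (x n), T (x n)⟫_𝕜)
    (Metric.isBounded_closedBall (x := 0) (r := ‖A‖ * ‖T‖))
    fun n => mem_closedBall_zero_iff.2 (T.norm_inner_apply_le A (hx n))
  exact ⟨β, ⟨x ∘ φ, fun n => hx (φ n), hTx.comp hφ.tendsto_atTop, hβ⟩, φ, hφ, hβ⟩

theorem exists_norm_eq_one_almost_norming_of_le_norm_sub (hT : T ≠ 0) {t : ℝ} (ht : 0 < t)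
    (μ : 𝕜) (horth : ‖T‖ ≤ ‖T - ((t : 𝕜) * μ) • A‖) :
    ∃ m : ∀ i, E i, (∀ i, ‖m i‖ = 1) ∧ ‖T‖ - t * (t + ‖μ‖ * ‖A‖) < ‖T m‖ ∧
      2 * re (conj μ * ⟪A m, T m⟫_𝕜) ≤ t * (2 * ‖T‖ + (‖μ‖ * ‖A‖) ^ 2) := by
  set S := T - ((t : 𝕜) * μ) • A
  have hS : S ≠ 0 := by
    rintro h
    rw [h, norm_zero] at horth
    exact hT (norm_eq_zero.1 (le_antisymm horth (norm_nonneg T)))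
  obtain ⟨m, hm, hSm⟩ := S.exists_norm_eq_one_lt_norm_apply_s5 hS (pow_pos ht 2)
  have hTm := T.norm_apply_le_of_norm_eq_one hm
  have hAm := A.norm_apply_le_of_norm_eq_one hm
  have hc : ‖(t : 𝕜) * μ‖ = t * ‖μ‖ := by simp [norm_mul, abs_of_pos ht]
  have hSm_eq : S m = T m - ((t : 𝕜) * μ) • A m := rfl
  refine ⟨m, hm, ?_, ?_⟩
  · have : ‖S m‖ ≤ ‖T m‖ + t * ‖μ‖ * ‖A‖ := by
      rw [hSm_eq]
      refine (norm_sub_le _ _).trans ?_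
      rw [norm_smul, hc]
      gcongr
    nlinarith
  · have hexp := norm_sub_smul_sq (T m) (A m) ((t : 𝕜) * μ)
    have hconj : conj ((t : 𝕜) * μ) * ⟪A m, T m⟫_𝕜 = (t : 𝕜) * (conj μ * ⟪A m, T m⟫_𝕜) := by
      rw [map_mul, conj_ofReal, mul_assoc]
    rw [← hSm_eq, hc, hconj, re_ofReal_mul] at hexp
    have hA2 : (t * ‖μ‖) ^ 2 * ‖A m‖ ^ 2 ≤ t ^ 2 * (‖μ‖ * ‖A‖) ^ 2 := by
      rw [mul_pow, mul_pow, mul_assoc]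
      gcongr
    have hTm2 : ‖T m‖ ^ 2 ≤ ‖T‖ ^ 2 := by gcongr
    have hSm2 : ‖T‖ ^ 2 - 2 * t ^ 2 * ‖T‖ ≤ ‖S m‖ ^ 2 := by
      rcases le_or_gt (t ^ 2) ‖T‖ with h | h
      · nlinarith
      · nlinarith [norm_nonneg T]
    refine le_of_mul_le_mul_left ?_ ht
    nlinarith

theorem exists_mem_normingInnerLimits_re_nonpos (hT : T ≠ 0)
    (horth : ∀ lam : 𝕜, ‖T‖ ≤ ‖T + lam • A‖) (μ : 𝕜) :
    ∃ β ∈ T.normingInnerLimits A, re (conj μ * β) ≤ 0 := by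
  obtain ⟨t, ht_pos, ht⟩ : ∃ t : ℕ → ℝ, (∀ n, 0 < t n) ∧ Tendsto t atTop (𝓝 0) :=
    ⟨_, fun _ => Nat.one_div_pos_of_nat, tendsto_one_div_add_atTop_nhds_zero_nat⟩
  have horth' (n : ℕ) : ‖T‖ ≤ ‖T - ((t n : 𝕜) * μ) • A‖ := by
    rw [sub_eq_add_neg, ← neg_smul]
    exact horth _
  choose x hx hTx hre using fun n => T.exists_norm_eq_one_almost_norming_of_le_norm_sub A hT
    (ht_pos n) μ (horth' n)
  have hnorm : Tendsto (fun n => ‖T (x n)‖) atTop (𝓝 ‖T‖) := by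
    refine tendsto_of_tendsto_of_tendsto_of_le_of_le ?_ tendsto_const_nhds (fun n => (hTx n).le)
      fun n => T.norm_apply_le_of_norm_eq_one (hx n)
    have := (tendsto_const_nhds (x := ‖T‖)).sub (ht.mul (ht.add_const (‖μ‖ * ‖A‖)))
    rwa [zero_mul, sub_zero] at this
  obtain ⟨β, hβ, φ, hφ, hlim⟩ := T.exists_mem_normingInnerLimits_tendsto_subseq A hx hnorm
  refine ⟨β, hβ, ?_⟩
  have := le_of_tendsto_of_tendsto'
    (((continuous_re.tendsto _).comp (hlim.const_mul (conj μ))).const_mul 2)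
    ((ht.comp hφ.tendsto_atTop).mul_const (2 * ‖T‖ + (‖μ‖ * ‖A‖) ^ 2)) fun n => hre (φ n)
  simp only [zero_mul] at this
  linarith

theorem norm_le_norm_add_smul_of_zero_mem_convexHull
    (h0 : (0 : 𝕜) ∈ convexHull ℝ (T.normingInnerLimits A)) (lam : 𝕜) :
    ‖T‖ ≤ ‖T + lam • A‖ := by
  set C := ‖T + lam • A‖ * ‖T‖ - ‖T‖ ^ 2
  have hW : T.normingInnerLimits A ⊆ {β | re (conj lam * β) ≤ C} := by
    rintro β ⟨x, hx, hTx, hβ⟩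
    have hle (n : ℕ) : ‖T (x n)‖ ^ 2 + re (conj lam * ⟪A (x n), T (x n)⟫_𝕜) ≤
        ‖T + lam • A‖ * ‖T (x n)‖ := by
      rw [← re_inner_add_smul_self]
      calc re ⟪(T + lam • A) (x n), T (x n)⟫_𝕜
          ≤ ‖(T + lam • A) (x n)‖ * ‖T (x n)‖ := re_le_norm _ |>.trans (norm_inner_le_norm _ _)
        _ ≤ ‖T + lam • A‖ * ‖T (x n)‖ :=
          mul_le_mul_of_nonneg_right ((T + lam • A).norm_apply_le_of_norm_eq_one (hx n))
            (norm_nonneg _)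
    have := le_of_tendsto_of_tendsto'
      ((hTx.pow 2).add ((continuous_re.tendsto _).comp (hβ.const_mul (conj lam))))
      (hTx.const_mul _) hle
    change _ ≤ C
    linarith
  have hlin : IsLinearMap ℝ fun β : 𝕜 => re (conj lam * β) :=
    (reLm.comp (LinearMap.mulLeft ℝ (conj lam))).isLinear
  have := convexHull_min hW (convex_halfSpace_le hlin C) h0
  simp only [mem_ofPred_eq, mul_zero, zero_re] at this
  nlinarith [norm_nonneg T, norm_nonneg (T + lam • A)]

end ContinuousMultilinearMap

theorem stmt5_general {𝕜 : Type*} [RCLike 𝕜] {k : ℕ} {H : Fin k → Type*}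
    [∀ i, NormedAddCommGroup (H i)] [∀ i, InnerProductSpace 𝕜 (H i)]
    {H' : Type*} [NormedAddCommGroup H'] [InnerProductSpace 𝕜 H']
    (T A : ContinuousMultilinearMap 𝕜 H H') (hT : T ≠ 0) :
    (∀ lam : 𝕜, ‖T‖ ≤ ‖T + lam • A‖) ↔
      (0 : 𝕜) ∈ convexHull ℝ {β : 𝕜 | ∃ x : ℕ → ∀ i, H i,
        (∀ n i, ‖x n i‖ = 1) ∧
        Tendsto (fun n => ‖T (x n)‖) atTop (𝓝 ‖T‖) ∧
        Tendsto (fun n => (inner 𝕜 (A (x n)) (T (x n)) : 𝕜)) atTop (𝓝 β)} := by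
  change _ ↔ 0 ∈ convexHull ℝ (T.normingInnerLimits A)
  refine ⟨fun horth => ?_, T.norm_le_norm_add_smul_of_zero_mem_convexHull A⟩
  by_contra h0
  obtain ⟨μ, hμ⟩ := exists_re_conj_mul_pos_of_zero_notMem_convexHull
    (T.isCompact_normingInnerLimits A) h0
  obtain ⟨β, hβ, hre⟩ := T.exists_mem_normingInnerLimits_re_nonpos A hT horth μ
  exact (hμ β hβ).not_ge hre

theorem stmt5 {𝕜 : Type*} [RCLike 𝕜] {k : ℕ} {H : Fin k → Type*}
    [∀ i, NormedAddCommGroup (H i)] [∀ i, InnerProductSpace 𝕜 (H i)]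
    [∀ i, CompleteSpace (H i)]
    {H' : Type*} [NormedAddCommGroup H'] [InnerProductSpace 𝕜 H'] [CompleteSpace H']
    (T A : ContinuousMultilinearMap 𝕜 H H') (hT : T ≠ 0) (hA : A ≠ 0) :
    (∀ lam : 𝕜, ‖T‖ ≤ ‖T + lam • A‖) ↔
      (0 : 𝕜) ∈ convexHull ℝ {β : 𝕜 | ∃ x : ℕ → ∀ i, H i,
        (∀ n i, ‖x n i‖ = 1) ∧
        Tendsto (fun n => ‖T (x n)‖) atTop (𝓝 ‖T‖) ∧
        Tendsto (fun n => (inner 𝕜 (A (x n)) (T (x n)) : 𝕜)) atTop (𝓝 β)} :=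
  stmt5_general T A hT
end

section
/- Let X_1, …, X_k, Y be normed linear spaces and T a nonzero smooth bounded k-linear map. Then for any two members ((x⃗ₙ, yₙ*)) and ((z⃗ₙ, wₙ*)) of M_T (sequences in the product of unit spheres times S_{Y*} with yₙ*(T x⃗ₙ) → ‖T‖ and wₙ*(T z⃗ₙ) → ‖T‖) and any bounded k-linear map A, both limits lim yₙ*(A x⃗ₙ) and lim wₙ*(A z⃗ₙ) exist and are equal. -/
/-!
Let `(u, v) ∈ M_T` and let `a` be a limit point of `vₙ(A uₙ)`. Then `vₙ((‖T‖A - aT) uₙ) → 0`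
along a subsequence, which forces `T ⊥ ‖T‖A - aT` in the sense of Birkhoff–James. If `b` is a limit
point coming from another member of `M_T`, smoothness gives
`T ⊥ (‖T‖A - aT) - (‖T‖A - bT) = (b - a)T`, and since `T ≠ 0` this means `a = b`. Hence all limit
points of all these bounded scalar sequences coincide, so they converge to a common limit.
-/

open Filter Topology

def BirkhoffJamesOrthogonal (𝕜 : Type*) {E : Type*} [NormedField 𝕜] [SeminormedAddCommGroup E]
    [NormedSpace 𝕜 E] (x y : E) : Prop :=
  ∀ c : 𝕜, ‖x‖ ≤ ‖x + c • y‖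

namespace BirkhoffJamesOrthogonal

variable {𝕜 E : Type*} [NormedField 𝕜]

theorem neg [SeminormedAddCommGroup E] [NormedSpace 𝕜 E] {x y : E}
    (h : BirkhoffJamesOrthogonal 𝕜 x y) : BirkhoffJamesOrthogonal 𝕜 x (-y) := fun c => by
  simpa only [neg_smul, smul_neg] using h (-c)

variable [NormedAddCommGroup E] [NormedSpace 𝕜 E]

theorem eq_zero_of_smul_self {x : E} (hx : x ≠ 0) {c : 𝕜}
    (h : BirkhoffJamesOrthogonal 𝕜 x (c • x)) : c = 0 := by
  by_contra hc
  have h₀ := h (-c⁻¹)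
  rw [smul_smul, neg_mul, inv_mul_cancel₀ hc, neg_one_smul, add_neg_cancel, norm_zero] at h₀
  exact hx (norm_le_zero_iff.mp h₀)

theorem eq_of_sub_smul {x y : E} (hx : x ≠ 0)
    (hadd : ∀ y₁ y₂, BirkhoffJamesOrthogonal 𝕜 x y₁ → BirkhoffJamesOrthogonal 𝕜 x y₂ →
      BirkhoffJamesOrthogonal 𝕜 x (y₁ + y₂))
    {a b : 𝕜} (ha : BirkhoffJamesOrthogonal 𝕜 x (y - a • x))
    (hb : BirkhoffJamesOrthogonal 𝕜 x (y - b • x)) : a = b := by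
  have hsum := hadd _ _ ha hb.neg
  rw [show y - a • x + -(y - b • x) = (b - a) • x by rw [sub_smul]; abel] at hsum
  exact (sub_eq_zero.mp (eq_zero_of_smul_self hx hsum)).symm

end BirkhoffJamesOrthogonal

/-- The members `((uₙ, vₙ))` of `M_T`. -/
structure IsNormingSequence {𝕜 : Type*} [RCLike 𝕜] {k : ℕ} {X : Fin k → Type*}
    [∀ i, NormedAddCommGroup (X i)] [∀ i, NormedSpace 𝕜 (X i)]
    {Y : Type*} [NormedAddCommGroup Y] [NormedSpace 𝕜 Y]
    (T : ContinuousMultilinearMap 𝕜 X Y) (u : ℕ → ∀ i, X i) (v : ℕ → Y →L[𝕜] 𝕜) : Prop where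
  norm_fst : ∀ n i, ‖u n i‖ = 1
  norm_snd : ∀ n, ‖v n‖ = 1
  tendsto : Tendsto (fun n => v n (T (u n))) atTop (𝓝 (‖T‖ : 𝕜))

namespace IsNormingSequence

variable {𝕜 : Type*} [RCLike 𝕜] {k : ℕ} {X : Fin k → Type*}
  [∀ i, NormedAddCommGroup (X i)] [∀ i, NormedSpace 𝕜 (X i)]
  {Y : Type*} [NormedAddCommGroup Y] [NormedSpace 𝕜 Y]
  {T : ContinuousMultilinearMap 𝕜 X Y} {u : ℕ → ∀ i, X i} {v : ℕ → Y →L[𝕜] 𝕜}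

theorem comp (h : IsNormingSequence T u v) {φ : ℕ → ℕ} (hφ : Tendsto φ atTop atTop) :
    IsNormingSequence T (u ∘ φ) (v ∘ φ) where
  norm_fst n := h.norm_fst (φ n)
  norm_snd n := h.norm_snd (φ n)
  tendsto := h.tendsto.comp hφ

theorem norm_apply_le (h : IsNormingSequence T u v) (C : ContinuousMultilinearMap 𝕜 X Y) (n : ℕ) :
    ‖v n (C (u n))‖ ≤ ‖C‖ :=
  calc ‖v n (C (u n))‖ ≤ ‖v n‖ * ‖C (u n)‖ := (v n).le_opNorm _
    _ ≤ 1 * (‖C‖ * ∏ i, ‖u n i‖) := by rw [h.norm_snd n]; gcongr; exact C.le_opNorm _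
    _ = ‖C‖ := by simp [h.norm_fst n]

theorem birkhoffJamesOrthogonal_of_tendsto_zero (h : IsNormingSequence T u v)
    {C : ContinuousMultilinearMap 𝕜 X Y}
    (hC : Tendsto (fun n => v n (C (u n))) atTop (𝓝 0)) : BirkhoffJamesOrthogonal 𝕜 T C := by
  intro c
  have hlim : Tendsto (fun n => ‖v n ((T + c • C) (u n))‖) atTop (𝓝 ‖T‖) := by
    simpa [smul_eq_mul] using (h.tendsto.add (hC.const_mul c)).norm
  exact le_of_tendsto hlim (Eventually.of_forall (h.norm_apply_le _))

theorem birkhoffJamesOrthogonal_smul_sub_smul (h : IsNormingSequence T u v)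
    {A : ContinuousMultilinearMap 𝕜 X Y} {a : 𝕜}
    (ha : Tendsto (fun n => v n (A (u n))) atTop (𝓝 a)) :
    BirkhoffJamesOrthogonal 𝕜 T ((‖T‖ : 𝕜) • A - a • T) := by
  refine h.birkhoffJamesOrthogonal_of_tendsto_zero ?_
  have hlim := (ha.const_mul (‖T‖ : 𝕜)).sub (h.tendsto.const_mul a)
  rw [mul_comm, sub_self] at hlim
  simpa [smul_eq_mul] using hlim

variable (hT : T ≠ 0)
  (hadd : ∀ A₁ A₂, BirkhoffJamesOrthogonal 𝕜 T A₁ → BirkhoffJamesOrthogonal 𝕜 T A₂ →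
    BirkhoffJamesOrthogonal 𝕜 T (A₁ + A₂))
include hT hadd

theorem limit_eq {u' : ℕ → ∀ i, X i} {v' : ℕ → Y →L[𝕜] 𝕜} (h : IsNormingSequence T u v)
    (h' : IsNormingSequence T u' v') {A : ContinuousMultilinearMap 𝕜 X Y} {a b : 𝕜}
    (ha : Tendsto (fun n => v n (A (u n))) atTop (𝓝 a))
    (hb : Tendsto (fun n => v' n (A (u' n))) atTop (𝓝 b)) : a = b :=
  BirkhoffJamesOrthogonal.eq_of_sub_smul hT hadd (h.birkhoffJamesOrthogonal_smul_sub_smul ha)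
    (h'.birkhoffJamesOrthogonal_smul_sub_smul hb)

theorem exists_tendsto (h : IsNormingSequence T u v) (A : ContinuousMultilinearMap 𝕜 X Y) :
    ∃ a, Tendsto (fun n => v n (A (u n))) atTop (𝓝 a) := by
  have hbdd {φ : ℕ → ℕ} (n : ℕ) : v (φ n) (A (u (φ n))) ∈ Metric.closedBall (0 : 𝕜) ‖A‖ := by
    simpa using h.norm_apply_le A (φ n)
  obtain ⟨a, -, φ, hφ, ha⟩ := tendsto_subseq_of_bounded Metric.isBounded_closedBall (hbdd (φ := id))
  refine ⟨a, tendsto_of_subseq_tendsto fun ns hns => ?_⟩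
  obtain ⟨b, -, ψ, hψ, hb⟩ := tendsto_subseq_of_bounded Metric.isBounded_closedBall (hbdd (φ := ns))
  have hab : b = a := limit_eq hT hadd (h.comp (hns.comp hψ.tendsto_atTop))
    (h.comp hφ.tendsto_atTop) hb ha
  exact ⟨ψ, hab ▸ hb⟩

end IsNormingSequence

theorem stmt12 {𝕜 : Type*} [RCLike 𝕜] {k : ℕ} {X : Fin k → Type*}
    [∀ i, NormedAddCommGroup (X i)] [∀ i, NormedSpace 𝕜 (X i)]
    {Y : Type*} [NormedAddCommGroup Y] [NormedSpace 𝕜 Y]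
    (T : ContinuousMultilinearMap 𝕜 X Y) (hT : T ≠ 0)
    (hsmooth : ∀ A₁ A₂ : ContinuousMultilinearMap 𝕜 X Y,
      (∀ lam : 𝕜, ‖T‖ ≤ ‖T + lam • A₁‖) → (∀ lam : 𝕜, ‖T‖ ≤ ‖T + lam • A₂‖) →
      (∀ lam : 𝕜, ‖T‖ ≤ ‖T + lam • (A₁ + A₂)‖))
    (x z : ℕ → ∀ i, X i) (y w : ℕ → (Y →L[𝕜] 𝕜))
    (hx : ∀ n i, ‖x n i‖ = 1) (hy : ∀ n, ‖y n‖ = 1)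
    (hz : ∀ n i, ‖z n i‖ = 1) (hw : ∀ n, ‖w n‖ = 1)
    (hxy : Tendsto (fun n => y n (T (x n))) atTop (𝓝 (‖T‖ : 𝕜)))
    (hzw : Tendsto (fun n => w n (T (z n))) atTop (𝓝 (‖T‖ : 𝕜)))
    (A : ContinuousMultilinearMap 𝕜 X Y) :
    ∃ lam : 𝕜, Tendsto (fun n => y n (A (x n))) atTop (𝓝 lam) ∧
      Tendsto (fun n => w n (A (z n))) atTop (𝓝 lam) := by
  have hxy' : IsNormingSequence T x y := ⟨hx, hy, hxy⟩
  have hzw' : IsNormingSequence T z w := ⟨hz, hw, hzw⟩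
  obtain ⟨a, ha⟩ := hxy'.exists_tendsto hT hsmooth A
  obtain ⟨b, hb⟩ := hzw'.exists_tendsto hT hsmooth A
  obtain rfl : a = b := hxy'.limit_eq hT hsmooth hzw' ha hb
  exact ⟨a, ha, hb⟩
end

section
/- Let Y be a normed linear space with a semi-inner-product [·,·] compatible with the norm, and let T, A be nonzero bounded k-linear maps into Y with ‖T‖ = 1. If T is smooth and T ⊥_B A, then for any sequence (x⃗ₙ) in the product of unit spheres with ‖T x⃗ₙ‖ → 1 and any sequence of semi-inner-products ([·,·]ₙ) on Y, one has [A x⃗ₙ, T x⃗ₙ]ₙ → 0. -/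
open Filter Topology

/-- A semi-inner-product (in the sense of Giles-Lumer) on a normed space `Y`,
compatible with the norm. -/
structure SIP (𝕜 Y : Type*) [RCLike 𝕜] [NormedAddCommGroup Y] [NormedSpace 𝕜 Y] where
  toFun : Y → Y → 𝕜
  add_left : ∀ x y z, toFun (x + y) z = toFun x z + toFun y z
  smul_left : ∀ (a : 𝕜) (x z : Y), toFun (a • x) z = a * toFun x z
  smul_right : ∀ (a : 𝕜) (x z : Y), toFun x (a • z) = starRingEnd 𝕜 a * toFun x z
  norm_compat : ∀ x, toFun x x = (‖x‖ : 𝕜) ^ 2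
  cauchy_schwarz : ∀ x z, ‖toFun x z‖ ≤ ‖x‖ * ‖z‖

/-!
The functionals `fₙ = [· xₙ, T xₙ]ₙ` on the space of multilinear maps lie in the unit ball of the
dual and satisfy `fₙ T = ‖T xₙ‖² → 1 = ‖T‖`. By Banach–Alaoglu every weak-* cluster point `g`
of `(fₙ)` is then a norm-one support functional at `T`. Such a `g` vanishes on `A`: otherwise
`B = (g A / ‖T‖) • T - A` lies in `ker g`, so `T ⊥_B B`, and smoothness would give
`T ⊥_B A + B`, a nonzero multiple of `T`. Hence `fₙ A → 0`.
-/

section Birkhoff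

variable (𝕜 : Type*) {E : Type*} [RCLike 𝕜] [NormedAddCommGroup E] [NormedSpace 𝕜 E]

def BirkhoffOrthogonal (T A : E) : Prop :=
  ∀ lam : 𝕜, ‖T‖ ≤ ‖T + lam • A‖

def IsSmoothPoint (T : E) : Prop :=
  ∀ A₁ A₂ : E, BirkhoffOrthogonal 𝕜 T A₁ → BirkhoffOrthogonal 𝕜 T A₂ →
    BirkhoffOrthogonal 𝕜 T (A₁ + A₂)

variable {𝕜}

theorem birkhoffOrthogonal_of_apply_eq_zero {g : StrongDual 𝕜 E} (hg : ‖g‖ ≤ 1) {T B : E}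
    (hgT : g T = ‖T‖) (hgB : g B = 0) : BirkhoffOrthogonal 𝕜 T B := fun lam ↦
  calc ‖T‖ = ‖g (T + lam • B)‖ := by simp [hgT, hgB]
    _ ≤ ‖g‖ * ‖T + lam • B‖ := g.le_opNorm _
    _ ≤ ‖T + lam • B‖ := mul_le_of_le_one_left (norm_nonneg _) hg

theorem not_birkhoffOrthogonal_smul_self {T : E} (hT : T ≠ 0) {c : 𝕜} (hc : c ≠ 0) :
    ¬ BirkhoffOrthogonal 𝕜 T (c • T) := fun h ↦ by
  have := h (-c⁻¹)
  rw [smul_smul, neg_mul, inv_mul_cancel₀ hc, neg_one_smul, add_neg_cancel, norm_zero] at this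
  exact hT (norm_le_zero_iff.mp this)

theorem IsSmoothPoint.apply_eq_zero {T A : E} (hs : IsSmoothPoint 𝕜 T) (hT : T ≠ 0)
    (hA : BirkhoffOrthogonal 𝕜 T A) {g : StrongDual 𝕜 E} (hg : ‖g‖ ≤ 1) (hgT : g T = ‖T‖) :
    g A = 0 := by
  by_contra hgA
  have hTnorm : (‖T‖ : 𝕜) ≠ 0 := by exact_mod_cast norm_ne_zero_iff.mpr hT
  set c := g A / ‖T‖
  have hB : BirkhoffOrthogonal 𝕜 T (c • T - A) :=
    birkhoffOrthogonal_of_apply_eq_zero hg hgT <| by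
      simp [c, hgT, div_mul_cancel₀ _ hTnorm]
  refine not_birkhoffOrthogonal_smul_self hT (div_ne_zero hgA hTnorm) ?_
  simpa using hs A _ hA hB

end Birkhoff

/-- By Banach–Alaoglu, every weak-* cluster point `g` of `(f i)` lies in the ball and has
`g T = a`. -/
theorem StrongDual.tendsto_apply_of_tendsto_apply {𝕜 E ι : Type*} [RCLike 𝕜]
    [NormedAddCommGroup E] [NormedSpace 𝕜 E] {l : Filter ι} {f : ι → StrongDual 𝕜 E} {r : ℝ}
    (hf : ∀ i, ‖f i‖ ≤ r) {T A : E} {a b : 𝕜} (hfT : Tendsto (fun i ↦ f i T) l (𝓝 a))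
    (h : ∀ g : StrongDual 𝕜 E, ‖g‖ ≤ r → g T = a → g A = b) :
    Tendsto (fun i ↦ f i A) l (𝓝 b) := by
  set K := WeakDual.toStrongDual ⁻¹' Metric.closedBall (0 : StrongDual 𝕜 E) r
  have hK : IsCompact K := WeakDual.isCompact_closedBall 0 r
  have hfK : ∀ i, StrongDual.toWeakDual (f i) ∈ K := by simpa [K] using hf
  have hlim : Tendsto (fun i ↦ StrongDual.toWeakDual (f i)) l (𝓝ˢ {g ∈ K | g T = a}) := by
    refine hK.tendsto_nhdsSet_of_mapClusterPt (Eventually.of_forall hfK) fun g hgK hg ↦ ⟨hgK, ?_⟩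
    have hgT : MapClusterPt (g T) l (fun i ↦ f i T) :=
      hg.tendsto_comp (WeakDual.eval_continuous T).continuousAt
    exact eq_of_nhds_neBot (hgT.clusterPt.mono hfT)
  refine ((WeakDual.eval_continuous A).tendsto_nhdsSet_nhds fun g hg ↦ ?_).comp hlim
  exact h (WeakDual.toStrongDual g) (by simpa [K] using hg.1) hg.2

namespace SIP

variable {𝕜 Y : Type*} [RCLike 𝕜] [NormedAddCommGroup Y] [NormedSpace 𝕜 Y]

def toDual (s : SIP 𝕜 Y) (y : Y) : StrongDual 𝕜 Y :=
  LinearMap.mkContinuous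
    { toFun := fun z ↦ s.toFun z y
      map_add' := fun z w ↦ s.add_left z w y
      map_smul' := fun c z ↦ s.smul_left c z y }
    ‖y‖ fun z ↦ (s.cauchy_schwarz z y).trans_eq (mul_comm _ _)

@[simp]
theorem toDual_apply (s : SIP 𝕜 Y) (y z : Y) : s.toDual y z = s.toFun z y := rfl

theorem norm_toDual_le (s : SIP 𝕜 Y) (y : Y) : ‖s.toDual y‖ ≤ ‖y‖ :=
  LinearMap.mkContinuous_norm_le _ (norm_nonneg y) _

end SIP

theorem ContinuousMultilinearMap.norm_apply_le_one {𝕜 ι : Type*} [NontriviallyNormedField 𝕜]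
    [Fintype ι] {X : ι → Type*} [∀ i, NormedAddCommGroup (X i)] [∀ i, NormedSpace 𝕜 (X i)]
    {Y : Type*} [NormedAddCommGroup Y] [NormedSpace 𝕜 Y] {m : ∀ i, X i} (hm : ‖m‖ ≤ 1) :
    ‖ContinuousMultilinearMap.apply 𝕜 X Y m‖ ≤ 1 :=
  ContinuousLinearMap.opNorm_le_bound _ zero_le_one fun B ↦ by
    simpa using B.unit_le_opNorm hm

theorem stmt13_general {𝕜 : Type*} [RCLike 𝕜] {k : ℕ} {X : Fin k → Type*}
    [∀ i, NormedAddCommGroup (X i)] [∀ i, NormedSpace 𝕜 (X i)]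
    {Y : Type*} [NormedAddCommGroup Y] [NormedSpace 𝕜 Y]
    (T A : ContinuousMultilinearMap 𝕜 X Y) (hTnorm : ‖T‖ = 1)
    (hsmooth : ∀ A₁ A₂ : ContinuousMultilinearMap 𝕜 X Y,
      (∀ lam : 𝕜, ‖T‖ ≤ ‖T + lam • A₁‖) → (∀ lam : 𝕜, ‖T‖ ≤ ‖T + lam • A₂‖) →
      (∀ lam : 𝕜, ‖T‖ ≤ ‖T + lam • (A₁ + A₂)‖))
    (horth : ∀ lam : 𝕜, ‖T‖ ≤ ‖T + lam • A‖)
    (x : ℕ → ∀ i, X i) (hx : ∀ n i, ‖x n i‖ = 1)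
    (hTx : Tendsto (fun n => ‖T (x n)‖) atTop (𝓝 (1 : ℝ)))
    (sip : ℕ → SIP 𝕜 Y) :
    Tendsto (fun n => (sip n).toFun (A (x n)) (T (x n))) atTop (𝓝 (0 : 𝕜)) := by
  have hxn : ∀ n, ‖x n‖ ≤ 1 := fun n ↦ (pi_norm_le_iff_of_nonneg zero_le_one).mpr fun i ↦ (hx n i).le
  set f : ℕ → StrongDual 𝕜 (ContinuousMultilinearMap 𝕜 X Y) := fun n ↦
    (sip n).toDual (T (x n)) ∘L ContinuousMultilinearMap.apply 𝕜 X Y (x n)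
  have hf : ∀ n, ‖f n‖ ≤ 1 := fun n ↦ calc
    ‖f n‖ ≤ ‖T (x n)‖ * 1 := ((sip n).toDual _).opNorm_comp_le _ |>.trans <|
      mul_le_mul ((sip n).norm_toDual_le _) (ContinuousMultilinearMap.norm_apply_le_one (hxn n))
        (norm_nonneg _) (norm_nonneg _)
    _ ≤ 1 := by simpa [hTnorm] using T.unit_le_opNorm (hxn n)
  have hfT : Tendsto (fun n ↦ f n T) atTop (𝓝 1) := by
    simpa [f, (sip _).norm_compat, Function.comp_def] using
      ((RCLike.continuous_ofReal (K := 𝕜)).tendsto _).comp (hTx.pow 2)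
  have hT : T ≠ 0 := norm_ne_zero_iff.mp (by simp [hTnorm])
  exact StrongDual.tendsto_apply_of_tendsto_apply hf hfT fun g hg hgT ↦
    IsSmoothPoint.apply_eq_zero hsmooth hT horth hg (by simpa [hTnorm] using hgT)

theorem stmt13 {𝕜 : Type*} [RCLike 𝕜] {k : ℕ} {X : Fin k → Type*}
    [∀ i, NormedAddCommGroup (X i)] [∀ i, NormedSpace 𝕜 (X i)]
    {Y : Type*} [NormedAddCommGroup Y] [NormedSpace 𝕜 Y]
    (T A : ContinuousMultilinearMap 𝕜 X Y) (hTnorm : ‖T‖ = 1) (hA : A ≠ 0)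
    (hsmooth : ∀ A₁ A₂ : ContinuousMultilinearMap 𝕜 X Y,
      (∀ lam : 𝕜, ‖T‖ ≤ ‖T + lam • A₁‖) → (∀ lam : 𝕜, ‖T‖ ≤ ‖T + lam • A₂‖) →
      (∀ lam : 𝕜, ‖T‖ ≤ ‖T + lam • (A₁ + A₂)‖))
    (horth : ∀ lam : 𝕜, ‖T‖ ≤ ‖T + lam • A‖)
    (x : ℕ → ∀ i, X i) (hx : ∀ n i, ‖x n i‖ = 1)
    (hTx : Tendsto (fun n => ‖T (x n)‖) atTop (𝓝 (1 : ℝ)))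
    (sip : ℕ → SIP 𝕜 Y) :
    Tendsto (fun n => (sip n).toFun (A (x n)) (T (x n))) atTop (𝓝 (0 : 𝕜)) :=
  stmt13_general T A hTnorm hsmooth horth x hx hTx sip
end
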